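/- Assume a ≠ 0 and T_L·T_R < 0. Let J ⊆ ℝ be an interval and let t ↦ (y₀(t), y₁(t)) be a differentiable solution on J of the planar ODE (ẏ₀, ẏ₁) = X_L(y₀, y₁) such that for all t ∈ J one has y₀(t) > 0, y₁(t) < 0, W_L(y₀(t)) > 0, W_L(y₁(t)) > 0, W_R(y₀(t)) > 0, and W_R(y₁(t)) > 0. Then the function t ↦ F(y₀(t), y₁(t)) has at most one zero in J; moreover, at any such zero its derivative is nonzero with the same sign as a·T_L (so the solution crosses the curve {F = 0} at most once, passing from {sign F = −sign(a T_L)} to {sign F = sign(a T_L)}). The same conclusion holds for solutions of (ẏ₀, ẏ₁) = X_R(y₀, y₁). -/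

import Mathlib

open Topology Filter Set

noncomputable section

/-- The quadratic polynomial `W(y) = D y² - a T y + a²` (this is `W_L` for
`(D,T) = (D_L,T_L)` and `W_R` for `(D,T) = (D_R,T_R)`). -/
def W (D T a y : ℝ) : ℝ := D * y ^ 2 - a * T * y + a ^ 2

/-- The quadratic function
`F(y₀,y₁) = a³(T_L - T_R) + a(D_L T_R - D_R T_L) y₀ y₁ + a²(D_R - D_L)(y₀ + y₁)`,
as a function on the plane. -/
def Fq (TL TR DL DR a : ℝ) (p : ℝ × ℝ) : ℝ :=
  a ^ 3 * (TL - TR) + a * (DL * TR - DR * TL) * p.1 * p.2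
    + a ^ 2 * (DR - DL) * (p.1 + p.2)

/-- The cubic vector field `X(y₀,y₁) = -(y₁ W(y₀), y₀ W(y₁))`; this is `X_L` for
`(D,T) = (D_L,T_L)` and `X_R` for `(D,T) = (D_R,T_R)`. -/
def Xvf (D T a : ℝ) (p : ℝ × ℝ) : ℝ × ℝ :=
  (-(p.2 * W D T a p.1), -(p.1 * W D T a p.2))

/-- Key algebraic identity: along either vector field, the derivative of `F` equals
`a (T_L W_R(y₀) - T_R W_L(y₀)) W(y₁)` modulo a multiple of `F`. -/
lemma key_id (TL TR DL DR a D T x0 x1 : ℝ)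
    (h : (D = DL ∧ T = TL) ∨ (D = DR ∧ T = TR)) :
    a * (DL * TR - DR * TL) * (-(x1 * W D T a x0) * x1 + x0 * -(x0 * W D T a x1))
      + a ^ 2 * (DR - DL) * (-(x1 * W D T a x0) + -(x0 * W D T a x1))
    = a * (TL * W DR TR a x0 - TR * W DL TL a x0) * W D T a x1
      + (-(a ^ 2) + a * T * x1 - D * x0 * x1) * Fq TL TR DL DR a (x0, x1) := by
  rcases h with ⟨hD, hT⟩ | ⟨hD, hT⟩ <;> subst hD <;> subst hT <;>
    simp only [W, Fq] <;> ring

/-- If a differentiable function has strictly positive derivative at each of its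
zeros in an order-connected set, it has at most one zero there. -/
lemma aux_unique {J : Set ℝ} (hJ : Set.OrdConnected J) {f f' : ℝ → ℝ}
    (hder : ∀ t ∈ J, HasDerivAt f (f' t) t)
    (hd : ∀ t ∈ J, f t = 0 → 0 < f' t) :
    ∀ s ∈ J, ∀ t ∈ J, f s = 0 → f t = 0 → s = t := by
  have hslope : ∀ u ∈ J, f u = 0 → ∀ᶠ x in 𝓝[≠] u, 0 < slope f u x := by
    intro u hu h0
    exact (hasDerivAt_iff_tendsto_slope.mp (hder u hu)).eventually
      (eventually_gt_nhds (hd u hu h0))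
  have hright : ∀ u ∈ J, f u = 0 → ∀ᶠ x in 𝓝[>] u, 0 < f x := by
    intro u hu h0
    have h2 : ∀ᶠ x in 𝓝[>] u, 0 < slope f u x :=
      (hslope u hu h0).filter_mono (nhdsWithin_mono u (fun x hx => hx.ne'))
    filter_upwards [h2, self_mem_nhdsWithin] with x hx hx'
    have hxu : u < x := hx'
    have hpos : 0 < slope f u x * (x - u) := mul_pos hx (sub_pos.mpr hxu)
    rw [slope_def_field, div_mul_cancel₀ _ (sub_ne_zero.mpr hxu.ne'), h0, sub_zero] at hpos
    exact hpos
  have hleft : ∀ u ∈ J, f u = 0 → ∀ᶠ x in 𝓝[<] u, f x < 0 := by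
    intro u hu h0
    have h2 : ∀ᶠ x in 𝓝[<] u, 0 < slope f u x :=
      (hslope u hu h0).filter_mono (nhdsWithin_mono u (fun x hx => hx.ne))
    filter_upwards [h2, self_mem_nhdsWithin] with x hx hx'
    have hxu : x < u := hx'
    have hneg : slope f u x * (x - u) < 0 :=
      mul_neg_of_pos_of_neg hx (sub_neg.mpr hxu)
    rw [slope_def_field, div_mul_cancel₀ _ (sub_ne_zero.mpr hxu.ne), h0, sub_zero] at hneg
    exact hneg
  have main : ∀ s ∈ J, ∀ t ∈ J, f s = 0 → f t = 0 → s < t → False := by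
    intro s hs t ht h0s h0t hst
    have hIcc : Set.Icc s t ⊆ J := hJ.out hs ht
    have hcont : ContinuousOn f (Set.Icc s t) := fun x hx =>
      ((hder x (hIcc hx)).continuousAt).continuousWithinAt
    obtain ⟨r, hrIoo, hrneg⟩ : ∃ r, r ∈ Set.Ioo s t ∧ f r < 0 := by
      have hmem : ∀ᶠ x in 𝓝[<] t, x ∈ Set.Ioo s t :=
        Filter.eventually_of_mem (Ioo_mem_nhdsLT hst) (fun x hx => hx)
      obtain ⟨r, hr1, hr2⟩ := ((hleft t ht h0t).and hmem).exists
      exact ⟨r, hr2, hr1⟩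
    have hsub : Set.Icc s r ⊆ Set.Icc s t := Set.Icc_subset_Icc le_rfl hrIoo.2.le
    set Z := Set.Icc s r ∩ f ⁻¹' {0} with hZdef
    have hZcl : IsClosed Z :=
      (hcont.mono hsub).preimage_isClosed_of_isClosed isClosed_Icc isClosed_singleton
    have hZc : IsCompact Z :=
      IsCompact.of_isClosed_subset isCompact_Icc hZcl Set.inter_subset_left
    have hsZ : s ∈ Z := ⟨⟨le_refl s, hrIoo.1.le⟩, h0s⟩
    set u := sSup Z with hu_def
    have huZ : u ∈ Z := hZc.sSup_mem ⟨s, hsZ⟩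
    have hfu : f u = 0 := huZ.2
    have hur : u < r := lt_of_le_of_ne huZ.1.2 (by
      intro h
      rw [h] at hfu
      exact absurd hfu (ne_of_lt hrneg))
    have huJ : u ∈ J := hIcc ⟨huZ.1.1, le_trans huZ.1.2 hrIoo.2.le⟩
    obtain ⟨x, hx1, hx2⟩ : ∃ x, 0 < f x ∧ x ∈ Set.Ioo u r :=
      ((hright u huJ hfu).and
        (Filter.eventually_of_mem (Ioo_mem_nhdsGT hur) (fun x hx => hx))).exists
    have hxr : x ≤ r := hx2.2.le
    have hsub2 : Set.Icc x r ⊆ Set.Icc s t :=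
      Set.Icc_subset_Icc (le_trans huZ.1.1 hx2.1.le) hrIoo.2.le
    obtain ⟨w, hw1, hw2⟩ := intermediate_value_Icc' hxr (hcont.mono hsub2)
      (⟨hrneg.le, hx1.le⟩ : (0 : ℝ) ∈ Set.Icc (f r) (f x))
    have hwZ : w ∈ Z := ⟨⟨le_trans (le_trans huZ.1.1 hx2.1.le) hw1.1, hw1.2⟩, hw2⟩
    have hwu : w ≤ u := le_csSup hZc.bddAbove hwZ
    exact absurd (lt_of_lt_of_le hx2.1 (le_trans hw1.1 hwu)) (lt_irrefl u)
  intro s hs t ht h0s h0t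
  rcases lt_trichotomy s t with h | h | h
  · exact (main s hs t ht h0s h0t h).elim
  · exact h
  · exact (main t ht s hs h0t h0s h).elim

/-- Assume `a ≠ 0` and `T_L T_R < 0`. Along any solution of `X_L` (or of `X_R`) on an
interval `J` that stays in the open fourth quadrant and on which `W_L` and `W_R` remain
positive at both coordinates, the function `t ↦ F(y₀(t), y₁(t))` has at most one zero;
at such a zero its derivative is nonzero with the sign of `a T_L` (so the solution
crosses the curve `{F = 0}` at most once, from `{sign F = -sign(a T_L)}` to
`{sign F = sign(a T_L)}`). -/
theorem crosses_gamma_at_most_once (TL TR DL DR a : ℝ) (ha : a ≠ 0) (hT : TL * TR < 0)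
    (J : Set ℝ) (hJ : J.OrdConnected) (y : ℝ → ℝ × ℝ)
    (hsol : (∀ t ∈ J, HasDerivAt y (Xvf DL TL a (y t)) t) ∨
            (∀ t ∈ J, HasDerivAt y (Xvf DR TR a (y t)) t))
    (hpos : ∀ t ∈ J, 0 < (y t).1 ∧ (y t).2 < 0 ∧
      0 < W DL TL a (y t).1 ∧ 0 < W DL TL a (y t).2 ∧
      0 < W DR TR a (y t).1 ∧ 0 < W DR TR a (y t).2) :
    (∀ s ∈ J, ∀ t ∈ J, Fq TL TR DL DR a (y s) = 0 → Fq TL TR DL DR a (y t) = 0 → s = t) ∧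
    (∀ t ∈ J, Fq TL TR DL DR a (y t) = 0 →
      deriv (fun s => Fq TL TR DL DR a (y s)) t ≠ 0 ∧
      Real.sign (deriv (fun s => Fq TL TR DL DR a (y s)) t) = Real.sign (a * TL)) := by
  have hTL : TL ≠ 0 := by
    rintro rfl; simp at hT
  obtain ⟨D, T, hDT, hsol'⟩ : ∃ D T, ((D = DL ∧ T = TL) ∨ (D = DR ∧ T = TR)) ∧
      ∀ t ∈ J, HasDerivAt y (Xvf D T a (y t)) t := by
    rcases hsol with h | h
    · exact ⟨DL, TL, Or.inl ⟨rfl, rfl⟩, h⟩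
    · exact ⟨DR, TR, Or.inr ⟨rfl, rfl⟩, h⟩
  set f : ℝ → ℝ := fun s => Fq TL TR DL DR a (y s) with hf_def
  set f' : ℝ → ℝ := fun t =>
    a * (DL * TR - DR * TL) *
        ((Xvf D T a (y t)).1 * (y t).2 + (y t).1 * (Xvf D T a (y t)).2)
      + a ^ 2 * (DR - DL) * ((Xvf D T a (y t)).1 + (Xvf D T a (y t)).2) with hf'_def
  have hder : ∀ t ∈ J, HasDerivAt f (f' t) t := by
    intro t ht
    have hy := hsol' t ht
    have h1 : HasDerivAt (fun s => (y s).1) (Xvf D T a (y t)).1 t := by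
      simpa using (hy.hasFDerivAt.fst).hasDerivAt
    have h2 : HasDerivAt (fun s => (y s).2) (Xvf D T a (y t)).2 t := by
      simpa using (hy.hasFDerivAt.snd).hasDerivAt
    have hmul : HasDerivAt (fun s => (y s).1 * (y s).2)
        ((Xvf D T a (y t)).1 * (y t).2 + (y t).1 * (Xvf D T a (y t)).2) t := h1.mul h2
    have hadd : HasDerivAt (fun s => (y s).1 + (y s).2)
        ((Xvf D T a (y t)).1 + (Xvf D T a (y t)).2) t := h1.add h2
    have hbig := ((hmul.const_mul (a * (DL * TR - DR * TL))).add
      (hadd.const_mul (a ^ 2 * (DR - DL)))).const_add (a ^ 3 * (TL - TR))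
    have heq : f = fun s => a ^ 3 * (TL - TR) +
        (a * (DL * TR - DR * TL) * ((y s).1 * (y s).2)
          + a ^ 2 * (DR - DL) * ((y s).1 + (y s).2)) := by
      funext s; simp only [hf_def, Fq]; ring
    rw [heq, hf'_def]
    exact hbig
  have hkey : ∀ t ∈ J, f t = 0 →
      f' t = a * (TL * W DR TR a (y t).1 - TR * W DL TL a (y t).1) * W D T a (y t).2 := by
    intro t ht h0
    have hk := key_id TL TR DL DR a D T (y t).1 (y t).2 hDT
    have h0' : Fq TL TR DL DR a ((y t).1, (y t).2) = 0 := by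
      simpa [hf_def] using h0
    simp only [hf'_def, Xvf]
    rw [hk, h0', mul_zero, add_zero]
  have hWD2 : ∀ t ∈ J, 0 < W D T a (y t).2 := by
    intro t ht
    rcases hDT with ⟨rfl, rfl⟩ | ⟨rfl, rfl⟩
    · exact (hpos t ht).2.2.2.1
    · exact (hpos t ht).2.2.2.2.2
  have hP : ∀ t ∈ J, 0 < TL * (TL * W DR TR a (y t).1 - TR * W DL TL a (y t).1) := by
    intro t ht
    have h1 := (hpos t ht).2.2.1
    have h2 := (hpos t ht).2.2.2.2.1
    nlinarith [pow_two_pos_of_ne_zero hTL]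
  have hmulpos : ∀ t ∈ J, f t = 0 → 0 < f' t * (a * TL) := by
    intro t ht h0
    rw [hkey t ht h0]
    have hw := hWD2 t ht
    have hp := hP t ht
    nlinarith [mul_pos (mul_pos (pow_two_pos_of_ne_zero ha) hw) hp]
  constructor
  · have haTL : a * TL ≠ 0 := mul_ne_zero ha hTL
    rcases haTL.lt_or_gt with hneg | hposa
    · intro s hs t ht h0s h0t
      exact aux_unique hJ (f := fun s => -f s) (f' := fun t => -f' t)
        (fun t ht => (hder t ht).neg)
        (fun t ht h0 => by
          show (0 : ℝ) < -f' t
          have h0f : f t = 0 := by simpa using h0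
          rcases mul_pos_iff.mp (hmulpos t ht h0f) with ⟨_, h2⟩ | ⟨h1, _⟩
          · linarith
          · linarith) s hs t ht (by simpa using h0s) (by simpa using h0t)
    · intro s hs t ht h0s h0t
      exact aux_unique hJ hder
        (fun t ht h0 => by
          rcases mul_pos_iff.mp (hmulpos t ht h0) with ⟨h1, _⟩ | ⟨_, h2⟩
          · exact h1
          · linarith) s hs t ht h0s h0t
  · intro t ht h0
    have hdeq : deriv f t = f' t := (hder t ht).deriv
    rw [hdeq]
    have hm := hmulpos t ht h0
    constructor
    · intro h; rw [h] at hm; simp at hm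
    · rcases lt_trichotomy (a * TL) 0 with h | h | h
      · have hf'neg : f' t < 0 := by
          rcases mul_pos_iff.mp hm with ⟨_, h2⟩ | ⟨h1, _⟩
          · linarith
          · exact h1
        rw [Real.sign_of_neg hf'neg, Real.sign_of_neg h]
      · rw [h] at hm; simp at hm
      · have hf'pos : 0 < f' t := by
          rcases mul_pos_iff.mp hm with ⟨h1, _⟩ | ⟨_, h2⟩
          · exact h1
          · linarith
        rw [Real.sign_of_pos hf'pos, Real.sign_of_pos h]
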